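/- arXiv:2106.05793 — 4 statements merged into one kernel-verified Lean document; each statement's English description precedes it below -/
import Mathlib

section
/- Let n, p be positive integers with p ≤ n/2, and for α ∈ {p, n-p} set β := (n-p+1)/(n-p). If α = n-p > n/2 and α > p+1 (so s₁ := 2α/(nβ) > 1), then g(s₁) > n, where g(s) := 2n / (1 + √(1 - (4p(n-p)/α²)·(2α/n - s)·s)). -/
theorem stmt_2 (n p α : ℕ) (hp : 0 < p) (hpn : p ≤ n / 2)
    (hα : α = n - p) (h1 : n / 2 < n - p) (h2 : p + 1 < n - p)
    (β s₁ : ℝ) (hβ : β = ((n : ℝ) - p + 1) / ((n : ℝ) - p))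
    (hs₁ : s₁ = 2 * (α : ℝ) / ((n : ℝ) * β))
    (hrad : 0 ≤ 1 - (4 * (p : ℝ) * ((n : ℝ) - p) / (α : ℝ) ^ 2) * (2 * (α : ℝ) / (n : ℝ) - s₁) * s₁) :
    2 * (n : ℝ) / (1 + Real.sqrt
      (1 - (4 * (p : ℝ) * ((n : ℝ) - p) / (α : ℝ) ^ 2) * (2 * (α : ℝ) / (n : ℝ) - s₁) * s₁)) > (n : ℝ) := by
  have hpn' : p < n := by omega
  have hn : 0 < n := by omega
  have hppos : (0:ℝ) < p := by exact_mod_cast hp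
  have hnR : (0:ℝ) < n := by exact_mod_cast hn
  have hnp : (0:ℝ) < (n:ℝ) - p := by
    have : (p:ℝ) < n := by exact_mod_cast hpn'
    linarith
  have hcast : (α : ℝ) = (n : ℝ) - p := by
    rw [hα, Nat.cast_sub hpn'.le]
  have hαpos : (0:ℝ) < α := by rw [hcast]; exact hnp
  have hβ1 : 1 < β := by
    rw [hβ, lt_div_iff₀ hnp]; linarith
  have hs₁pos : 0 < s₁ := by
    rw [hs₁]; positivity
  have hs₁lt : s₁ < 2 * (α:ℝ) / n := by
    rw [hs₁]
    exact div_lt_div_of_pos_left (by linarith) hnR (by nlinarith)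
  have hterm : 0 < (4 * (p : ℝ) * ((n : ℝ) - p) / (α : ℝ) ^ 2) * (2 * (α : ℝ) / (n : ℝ) - s₁) * s₁ := by
    have hA : 0 < 4 * (p:ℝ) * ((n:ℝ)-p) / (α:ℝ)^2 := by positivity
    have hB : 0 < 2*(α:ℝ)/n - s₁ := by linarith
    positivity
  have hsqrt : Real.sqrt (1 - (4 * (p : ℝ) * ((n : ℝ) - p) / (α : ℝ) ^ 2) * (2 * (α : ℝ) / (n : ℝ) - s₁) * s₁) < 1 := by
    have := Real.sqrt_lt_sqrt hrad (show (1 - (4 * (p : ℝ) * ((n : ℝ) - p) / (α : ℝ) ^ 2) * (2 * (α : ℝ) / (n : ℝ) - s₁) * s₁) < 1 by linarith)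
    rwa [Real.sqrt_one] at this
  have hden : 0 < 1 + Real.sqrt (1 - (4 * (p : ℝ) * ((n : ℝ) - p) / (α : ℝ) ^ 2) * (2 * (α : ℝ) / (n : ℝ) - s₁) * s₁) := by
    have := Real.sqrt_nonneg (1 - (4 * (p : ℝ) * ((n : ℝ) - p) / (α : ℝ) ^ 2) * (2 * (α : ℝ) / (n : ℝ) - s₁) * s₁)
    linarith
  rw [gt_iff_lt, lt_div_iff₀ hden]
  nlinarith
end

section
/- Let n, p be positive integers with p ≤ n/2 and let α = p, β = (n-p+1)/(n-p), s₁ = 2α/(nβ). If s₁ < 1, then the maximum over s ∈ [s₁, 1] of s(2-s)·g(s), where g(s) = 2n/(1 + √(1 - (4p(n-p)/α²)(2α/n - s)s)), is at least (2α/n)(2 - 2α/n)·g(2α/n), and this lower bound is strictly greater than np/(n-p). -/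
theorem stmt_3 (n p α : ℕ) (hp : 0 < p) (hn : 2 * p < n) (hα : α = p)
    (β s₁ : ℝ) (hβ : β = ((n : ℝ) - p + 1) / ((n : ℝ) - p))
    (hs₁ : s₁ = 2 * (α : ℝ) / ((n : ℝ) * β)) (hs₁1 : s₁ < 1)
    (g : ℝ → ℝ)
    (hg : ∀ s, g s = 2 * (n : ℝ) / (1 + Real.sqrt
      (1 - (4 * (p : ℝ) * ((n : ℝ) - p) / (α : ℝ) ^ 2) * (2 * (α : ℝ) / (n : ℝ) - s) * s))) :
    (2 * (α : ℝ) / (n : ℝ)) * (2 - 2 * (α : ℝ) / (n : ℝ)) * g (2 * (α : ℝ) / (n : ℝ)) ≤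
      sSup ((fun s => s * (2 - s) * g s) '' Set.Icc s₁ 1) ∧
    (n : ℝ) * p / ((n : ℝ) - p) <
      (2 * (α : ℝ) / (n : ℝ)) * (2 - 2 * (α : ℝ) / (n : ℝ)) * g (2 * (α : ℝ) / (n : ℝ)) := by
  have hpn : (2 : ℝ) * p < n := by exact_mod_cast hn
  have hp0 : (0 : ℝ) < p := by exact_mod_cast hp
  have hn0 : (0 : ℝ) < n := by linarith
  have hnp : (0 : ℝ) < (n : ℝ) - p := by linarith
  have hα0 : (0 : ℝ) < α := by rw [hα]; exact_mod_cast hp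
  -- g at the point 2α/n equals n
  have hgc : g (2 * (α : ℝ) / n) = n := by
    rw [hg]
    have : (2 * (α : ℝ) / n - 2 * (α : ℝ) / n) = 0 := by ring
    rw [this]
    simp [Real.sqrt_one]
    ring
  have hβ1 : (1 : ℝ) < β := by
    rw [hβ]
    rw [lt_div_iff₀ hnp]
    linarith
  have hc1 : 2 * (α : ℝ) / n ≤ 1 := by
    rw [div_le_one hn0, hα]
    linarith
  have hs₁c : s₁ ≤ 2 * (α : ℝ) / n := by
    rw [hs₁]
    apply div_le_div_of_nonneg_left (by linarith) hn0
    nlinarith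
  have hmem : (2 * (α : ℝ) / n) ∈ Set.Icc s₁ 1 := ⟨hs₁c, hc1⟩
  have hs₁pos : 0 < s₁ := by
    rw [hs₁]
    apply div_pos (by linarith)
    positivity
  constructor
  · apply le_csSup
    · -- bounded above by 2n
      refine ⟨2 * (n : ℝ), ?_⟩
      rintro x ⟨s, ⟨hs1, hs2⟩, rfl⟩
      have hs0 : 0 < s := lt_of_lt_of_le hs₁pos hs1
      have hA : 0 ≤ s * (2 - s) := by nlinarith
      have hA1 : s * (2 - s) ≤ 1 := by nlinarith
      have hgle : g s ≤ 2 * n := by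
        rw [hg]
        have hsq := Real.sqrt_nonneg (1 - (4 * (p : ℝ) * ((n : ℝ) - p) / (α : ℝ) ^ 2) * (2 * (α : ℝ) / (n : ℝ) - s) * s)
        rw [div_le_iff₀ (by linarith)]
        nlinarith
      have hg0 : 0 ≤ g s := by
        rw [hg]
        have hsq := Real.sqrt_nonneg (1 - (4 * (p : ℝ) * ((n : ℝ) - p) / (α : ℝ) ^ 2) * (2 * (α : ℝ) / (n : ℝ) - s) * s)
        positivity
      calc s * (2 - s) * g s ≤ 1 * g s := mul_le_mul_of_nonneg_right hA1 hg0
        _ = g s := one_mul _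
        _ ≤ 2 * n := hgle
    · exact ⟨2 * (α : ℝ) / n, hmem, rfl⟩
  · rw [hgc, hα]
    rw [div_lt_iff₀ hnp]
    have : (2 * (p : ℝ) / n) * (2 - 2 * (p : ℝ) / n) * n = 4 * p * ((n : ℝ) - p) / n := by
      field_simp
      ring
    rw [this, div_mul_eq_mul_div, lt_div_iff₀ hn0]
    nlinarith [mul_pos (mul_pos hp0 (by linarith : (0:ℝ) < n - 2*p)) (by linarith : (0:ℝ) < 3*n - 2*p)]
end

section
/- Let k₁, …, kₙ be real numbers with mean H_v = (1/n)Σkᵢ, and define the traceless quantities μᵢ = kᵢ - H_v with |Φ_v|² = Σμᵢ². Then for any subset {i₁,…,i_p} ⊂ {1,…,n} of size p, (Σ_{j=1}^p k_{i_j})·(nH_v - Σ_{j=1}^p k_{i_j}) ≥ -(p(n-p)/n)·(|Φ_v|² + (n|n-2p|/√(np(n-p)))·|H_v|·|Φ_v| - n·H_v²). -/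
theorem stmt_5 (n p : ℕ) (hn : 2 ≤ n) (hp : 1 ≤ p) (hpn : p ≤ n - 1)
    (k : Fin n → ℝ) (Hv : ℝ) (hH : Hv = (1 / (n : ℝ)) * ∑ i, k i)
    (Φ : ℝ) (hΦ0 : 0 ≤ Φ) (hΦ : Φ ^ 2 = ∑ i, (k i - Hv) ^ 2)
    (I : Finset (Fin n)) (hI : I.card = p) :
    (∑ i ∈ I, k i) * ((n : ℝ) * Hv - ∑ i ∈ I, k i) ≥
      -((p : ℝ) * ((n : ℝ) - p) / (n : ℝ)) *
        (Φ ^ 2 + ((n : ℝ) * |(n : ℝ) - 2 * p| / Real.sqrt ((n : ℝ) * p * ((n : ℝ) - p))) * |Hv| * Φ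
          - (n : ℝ) * Hv ^ 2) := by
  have hn0 : (0:ℝ) < n := by positivity
  have hp0 : (0:ℝ) < p := by exact_mod_cast hp
  have hpltn : p < n := lt_of_le_of_lt hpn (Nat.sub_lt (by omega) one_pos)
  have hnp0 : (0:ℝ) < (n:ℝ) - p := by
    have : (p:ℝ) < n := by exact_mod_cast hpltn
    linarith
  set μ : Fin n → ℝ := fun i => k i - Hv with hμ
  have hsum : ∑ i, μ i = 0 := by
    simp only [hμ, Finset.sum_sub_distrib, Finset.sum_const, Finset.card_univ,
      Fintype.card_fin, nsmul_eq_mul]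
    rw [hH]; field_simp; ring
  set T := ∑ i ∈ I, μ i with hT
  have hcomp : ∑ i ∈ Iᶜ, μ i = -T := by
    have := Finset.sum_add_sum_compl I μ
    rw [hsum] at this; linarith
  have hcardc : (Iᶜ.card : ℝ) = (n:ℝ) - p := by
    rw [Finset.card_compl, hI, Fintype.card_fin]
    push_cast [Nat.cast_sub hpltn.le]; ring
  have hA : T ^ 2 ≤ (p:ℝ) * ∑ i ∈ I, μ i ^ 2 := by
    have := sq_sum_le_card_mul_sum_sq (s := I) (f := μ)
    rwa [hI] at this
  have hB : T ^ 2 ≤ ((n:ℝ) - p) * ∑ i ∈ Iᶜ, μ i ^ 2 := by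
    have h := sq_sum_le_card_mul_sum_sq (s := Iᶜ) (f := μ)
    rw [hcomp, neg_pow, hcardc] at h
    simpa using h
  have hsplit : ∑ i ∈ I, μ i ^ 2 + ∑ i ∈ Iᶜ, μ i ^ 2 = Φ ^ 2 := by
    rw [hΦ]; exact Finset.sum_add_sum_compl I _
  set q : ℝ := (p:ℝ) * ((n:ℝ) - p) / n with hqdef
  have hq : 0 < q := by positivity
  have hT2 : T ^ 2 ≤ q * Φ ^ 2 := by
    rw [hqdef, div_mul_eq_mul_div, le_div_iff₀ hn0]
    have h1 := mul_le_mul_of_nonneg_left hA hnp0.le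
    have h2 := mul_le_mul_of_nonneg_left hB hp0.le
    have h3 : (p:ℝ) * ((n:ℝ) - p) * Φ ^ 2
        = ((n:ℝ) - p) * ((p:ℝ) * ∑ i ∈ I, μ i ^ 2)
          + (p:ℝ) * (((n:ℝ) - p) * ∑ i ∈ Iᶜ, μ i ^ 2) := by
      rw [← hsplit]; ring
    linarith [h1, h2, h3]
  set sq : ℝ := Real.sqrt q with hsqdef
  have hsq0 : 0 < sq := Real.sqrt_pos.mpr hq
  have hsq2 : sq ^ 2 = q := Real.sq_sqrt hq.le
  have habsT : |T| ≤ sq * Φ := by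
    have h1 : |T| = Real.sqrt (T ^ 2) := (Real.sqrt_sq_eq_abs T).symm
    rw [h1, hsqdef, ← Real.sqrt_sq hΦ0, ← Real.sqrt_mul hq.le]
    exact Real.sqrt_le_sqrt hT2
  have hsqrtq : Real.sqrt ((n:ℝ) * p * ((n:ℝ) - p)) = (n:ℝ) * sq := by
    rw [show (n:ℝ) * p * ((n:ℝ) - p) = (n:ℝ) ^ 2 * q by rw [hqdef]; field_simp,
      Real.sqrt_mul (sq_nonneg _), Real.sqrt_sq hn0.le, hsqdef]
  have hS : ∑ i ∈ I, k i = (p:ℝ) * Hv + T := by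
    have : ∑ i ∈ I, k i = ∑ i ∈ I, (μ i + Hv) := by simp [hμ]
    rw [this, Finset.sum_add_distrib, Finset.sum_const, hI, nsmul_eq_mul, hT]; ring
  set c : ℝ := |(n:ℝ) - 2 * p| with hcdef
  have hc0 : 0 ≤ c := abs_nonneg _
  have hcross : ((n:ℝ) - 2 * p) * Hv * T ≥ -(c * |Hv| * (sq * Φ)) := by
    have h1 : |((n:ℝ) - 2 * p) * Hv * T| = c * |Hv| * |T| := by
      rw [abs_mul, abs_mul, hcdef]
    have h2 : c * |Hv| * |T| ≤ c * |Hv| * (sq * Φ) := by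
      apply mul_le_mul_of_nonneg_left habsT (by positivity)
    have h3 := neg_abs_le (((n:ℝ) - 2 * p) * Hv * T)
    rw [h1] at h3
    linarith
  rw [hS, hsqrtq]
  have e1 : (n:ℝ) * c / ((n:ℝ) * sq) = c / sq :=
    mul_div_mul_left _ _ (ne_of_gt hn0)
  have e2 : q * (c / sq) = c * sq := by
    rw [← hsq2]; field_simp
  have e3 : q * (n:ℝ) = (p:ℝ) * ((n:ℝ) - p) := by
    rw [hqdef]; field_simp
  have hRHS : -((p : ℝ) * ((n : ℝ) - p) / (n : ℝ)) *
        (Φ ^ 2 + ((n : ℝ) * c / ((n:ℝ) * sq)) * |Hv| * Φ - (n : ℝ) * Hv ^ 2)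
      = -(q * Φ ^ 2) - c * sq * |Hv| * Φ + (p:ℝ) * ((n:ℝ) - p) * Hv ^ 2 := by
    rw [e1, ← hqdef]
    linear_combination (-(|Hv| * Φ)) * e2 + Hv ^ 2 * e3
  rw [hRHS]
  have hexp : ((p:ℝ) * Hv + T) * ((n:ℝ) * Hv - ((p:ℝ) * Hv + T))
      = (p:ℝ) * ((n:ℝ) - p) * Hv ^ 2 + ((n:ℝ) - 2 * p) * Hv * T - T ^ 2 := by ring
  rw [hexp]
  linarith [hcross, hT2]
end

section
/- Let n, p, α, c, ρ be as above with n > 2p, and define g(s) = (nρ/s)/a(t(s)) where t(s) is the solution of b(t) + n·a(t) = nρ/s with a(t) = 1+nc/t, b(t) = n(1-ct). Then g(s) = 2n/(1 + √(1 - (4p(n-p)/α²)(2α/n - s)·s)). -/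
set_option maxHeartbeats 1000000


theorem stmt_16 (n p α : ℕ) (hp : 1 ≤ p) (hn : 2 * p < n) (hα : α = p ∨ α = n - p)
    (c ρ s : ℝ)
    (hc : c = ((n : ℝ) - 2 * p) / (2 * Real.sqrt ((n : ℝ) * p * ((n : ℝ) - p))))
    (hρ : ρ = (n : ℝ) * α / (2 * p * ((n : ℝ) - p)))
    (hs0 : 0 < s) (hs1 : s ≤ 1)
    (hρs : 2 * (n : ℝ) ≤ (n : ℝ) * ρ / s)
    (hrad : 0 ≤ 1 - (4 * (p : ℝ) * ((n : ℝ) - p) / (α : ℝ) ^ 2) * (2 * (α : ℝ) / (n : ℝ) - s) * s)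
    (a b : ℝ → ℝ) (hafun : ∀ t, a t = 1 + (n : ℝ) * c / t) (hbfun : ∀ t, b t = (n : ℝ) * (1 - c * t))
    (t : ℝ) (ht0 : 0 < t) (ht : b t + (n : ℝ) * a t = (n : ℝ) * ρ / s) :
    ((n : ℝ) * ρ / s) / a t = 2 * (n : ℝ) / (1 + Real.sqrt
      (1 - (4 * (p : ℝ) * ((n : ℝ) - p) / (α : ℝ) ^ 2) * (2 * (α : ℝ) / (n : ℝ) - s) * s)) := by
  have hpR : (1:ℝ) ≤ p := by exact_mod_cast hp
  have hnR : 2 * (p:ℝ) < n := by exact_mod_cast hn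
  have hp0 : (0:ℝ) < p := by linarith
  have hn0 : (0:ℝ) < n := by linarith
  have hnp0 : (0:ℝ) < (n:ℝ) - p := by linarith
  have hn2p : (0:ℝ) < (n:ℝ) - 2*p := by linarith
  have hα1 : 1 ≤ α := by rcases hα with h | h <;> omega
  have hα0 : (0:ℝ) < α := by exact_mod_cast hα1
  have hq0 : (0:ℝ) < (n:ℝ) * p * ((n:ℝ) - p) := by positivity
  have hsq0 : (0:ℝ) < Real.sqrt ((n:ℝ) * p * ((n:ℝ) - p)) := Real.sqrt_pos.mpr hq0
  have hc0 : 0 < c := by rw [hc]; positivity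
  have hcsq : c ^ 2 = ((n:ℝ) - 2*p) ^ 2 / (4 * ((n:ℝ) * p * ((n:ℝ) - p))) := by
    rw [hc, div_pow, mul_pow, Real.sq_sqrt hq0.le]; ring
  set M : ℝ := (n:ℝ) * ρ / s with hMdef
  set R : ℝ := 1 - (4 * (p:ℝ) * ((n:ℝ) - p) / (α:ℝ) ^ 2) * (2 * (α:ℝ) / (n:ℝ) - s) * s with hRdef
  set u : ℝ := (n:ℝ) * c / t with hudef
  have hu0 : 0 < u := by positivity
  have hut : u * t = (n:ℝ) * c := by rw [hudef, div_mul_cancel₀ _ ht0.ne']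
  have ht' : (n:ℝ) * (1 - c * t) + n * (1 + u) = M := by
    rw [hbfun, hafun] at ht; exact ht
  have hq1 : (n:ℝ) * u ^ 2 + (2*n - M) * u = n^2 * c^2 := by
    have h1 : (n:ℝ) - n * (c * t) + (n + n * u) = M := by linarith [ht']
    have h2 : ((n:ℝ) - n * (c * t) + (n + n * u)) * u = M * u := by rw [h1]
    have h3 : (n:ℝ) * (c * t) * u = n^2 * c^2 := by
      have : (n:ℝ) * (c * t) * u = n * c * (u * t) := by ring
      rw [this, hut]; ring
    nlinarith [h2, h3]
  have hMs : M * s = (n:ℝ)^2 * α / (2 * p * ((n:ℝ) - p)) := by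
    rw [hMdef, hρ]; field_simp
  have hDR : (M - 2*n)^2 + 4*(n:ℝ)^3 * c^2 = M^2 * R := by
    have hM : M = (n:ℝ)^2 * α / (2 * p * ((n:ℝ) - p)) / s := by
      rw [hMdef, hρ]; field_simp
    rw [hM, hcsq, hRdef]
    field_simp
    ring
  set x : ℝ := 2*(n:ℝ)*u + 2*n - M with hxdef
  have hx2 : x ^ 2 = M^2 * R := by
    rw [← hDR, hxdef]; nlinarith [hq1]
  have hM2n : 2 * (n:ℝ) ≤ M := hρs
  have hx0 : 0 ≤ x := by
    have hD : x^2 = (M - 2*n)^2 + 4*(n:ℝ)^3 * c^2 := by rw [hx2, hDR]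
    nlinarith [mul_pos (mul_pos hn0 hn0) (mul_pos hn0 (mul_pos hc0 hc0)), mul_pos hn0 hu0]
  have hM0 : 0 < M := by linarith
  have hxval : x = M * Real.sqrt R := by
    have h1 : x = Real.sqrt (x^2) := (Real.sqrt_sq hx0).symm
    rw [h1, hx2, Real.sqrt_mul (sq_nonneg M), Real.sqrt_sq hM0.le]
  have hsR : 0 ≤ Real.sqrt R := Real.sqrt_nonneg R
  have hden : (0:ℝ) < 1 + Real.sqrt R := by linarith
  have hat : a t = M * (1 + Real.sqrt R) / (2*n) := by
    rw [hafun]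
    have : 2*(n:ℝ)*(1 + u) = M * (1 + Real.sqrt R) := by
      have := hxval; rw [hxdef] at this; linarith
    rw [← hudef]
    field_simp
    linarith [this]
  rw [hat]
  rw [div_div_eq_mul_div]
  rw [mul_comm M (1 + Real.sqrt R)]
  rw [← div_div, mul_div_assoc]
  exact mul_div_cancel_left₀ _ hM0.ne'
end
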